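/- arXiv:2408.02347 — 2 statements merged into one kernel-verified Lean document; each statement's English description precedes it below -/
import Mathlib

section
/- The function d(p,q) = (p−q)²/((p+q)(2−(p+q))) on [0,1]² is a single-bit divergence: d(p,q)=0 iff p=q, and it is monotone in the sense that for p' ≤ p ≤ q ≤ q', both d(p,q) ≤ d(p',q') and d(q,p) ≤ d(q',p') hold. -/
/-- Symmetric chi-square divergence of `Ber p` and `Ber q` (0 at the degenerate points p=q∈{0,1}). -/
noncomputable def chiSq (p q : ℝ) : ℝ := (p - q) ^ 2 / ((p + q) * (2 - (p + q)))
lemma stepq (p q q' : ℝ) (hp : 0 ≤ p) (h2 : p ≤ q) (h3 : q ≤ q') (h4 : q' ≤ 1) :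
    (p - q)^2 * ((p + q') * (2 - (p + q'))) ≤ (p - q')^2 * ((p + q) * (2 - (p + q))) := by
  obtain ⟨t, ht'⟩ : ∃ t, t = q - p := ⟨_, rfl⟩
  obtain ⟨b, hb'⟩ : ∃ b, b = q' - q := ⟨_, rfl⟩
  obtain ⟨s, hs'⟩ : ∃ s, s = p + q := ⟨_, rfl⟩
  have ht : 0 ≤ t := by linarith
  have hb : 0 ≤ b := by linarith
  have hs : 0 ≤ s := by linarith
  have hs2 : s ≤ 2 := by linarith
  have hts : t ≤ s := by linarith
  have key : 0 ≤ t^2*(2*s - 2 + b) + (2*t + b)*(s*(2 - s)) := by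
    rcases le_total s 1 with h | h
    · nlinarith [mul_nonneg ht (mul_nonneg (sub_nonneg.mpr hts) (sub_nonneg.mpr h)), mul_nonneg ht hs, mul_nonneg hb (mul_nonneg ht ht), mul_nonneg hb (mul_nonneg hs (sub_nonneg.mpr hs2))]
    · nlinarith [mul_nonneg (mul_nonneg ht ht) (sub_nonneg.mpr h), mul_nonneg (mul_nonneg ht ht) hb, mul_nonneg (mul_nonneg ht hs) (sub_nonneg.mpr hs2), mul_nonneg (mul_nonneg hb hs) (sub_nonneg.mpr hs2)]
  have expand : (p - q')^2 * ((p + q) * (2 - (p + q))) - (p - q)^2 * ((p + q') * (2 - (p + q'))) = b * (t^2*(2*s - 2 + b) + (2*t + b)*(s*(2 - s))) := by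
    subst ht' hb' hs'; ring
  linarith [mul_nonneg hb key]
lemma stepp (p' p q : ℝ) (hp : 0 ≤ p') (h1 : p' ≤ p) (h2 : p ≤ q) (h4 : q ≤ 1) :
    (p - q)^2 * ((p' + q) * (2 - (p' + q))) ≤ (p' - q)^2 * ((p + q) * (2 - (p + q))) := by
  obtain ⟨t, ht'⟩ : ∃ t, t = q - p := ⟨_, rfl⟩
  obtain ⟨a, ha'⟩ : ∃ a, a = p - p' := ⟨_, rfl⟩
  obtain ⟨s, hs'⟩ : ∃ s, s = p + q := ⟨_, rfl⟩
  have ht : 0 ≤ t := by linarith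
  have ha : 0 ≤ a := by linarith
  have hs : 0 ≤ s := by linarith
  have hs2 : s ≤ 2 := by linarith
  have hts : t ≤ 2 - s := by linarith
  have key : 0 ≤ (2*t + a)*(s*(2 - s)) - t^2*(2*s - 2 - a) := by
    rcases le_total s 1 with h | h
    · nlinarith [mul_nonneg (mul_nonneg ht ht) (sub_nonneg.mpr h), mul_nonneg (mul_nonneg ht ht) ha, mul_nonneg (mul_nonneg ht hs) (sub_nonneg.mpr hs2), mul_nonneg (mul_nonneg ha hs) (sub_nonneg.mpr hs2)]
    · nlinarith [mul_nonneg ht (mul_nonneg (sub_nonneg.mpr hts) (sub_nonneg.mpr h)), mul_nonneg ht (sub_nonneg.mpr hs2), mul_nonneg ha (mul_nonneg ht ht), mul_nonneg ha (mul_nonneg hs (sub_nonneg.mpr hs2))]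
  have expand : (p' - q)^2 * ((p + q) * (2 - (p + q))) - (p - q)^2 * ((p' + q) * (2 - (p' + q))) = a * ((2*t + a)*(s*(2 - s)) - t^2*(2*s - 2 - a)) := by
    subst ht' ha' hs'; ring
  linarith [mul_nonneg ha key]

lemma chiSq_symm (p q : ℝ) : chiSq q p = chiSq p q := by
  unfold chiSq; ring_nf

lemma denom_zero {p q : ℝ} (hp : 0 ≤ p) (hq : 0 ≤ q) (hp1 : p ≤ 1) (hq1 : q ≤ 1)
    (h : (p + q) * (2 - (p + q)) = 0) : (p = 0 ∧ q = 0) ∨ (p = 1 ∧ q = 1) := by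
  rcases mul_eq_zero.mp h with h | h
  · left; constructor <;> linarith
  · right; constructor <;> linarith

lemma chiSq_mono_q {p q q' : ℝ} (hp : 0 ≤ p) (h2 : p ≤ q) (h3 : q ≤ q') (h4 : q' ≤ 1) :
    chiSq p q ≤ chiSq p q' := by
  unfold chiSq
  have hd' : 0 ≤ (p + q') * (2 - (p + q')) := by nlinarith
  have hd : 0 ≤ (p + q) * (2 - (p + q)) := by nlinarith
  rcases eq_or_lt_of_le hd' with hz | hpos
  · rcases denom_zero hp (by linarith) (by linarith) h4 hz.symm with ⟨e1, e2⟩ | ⟨e1, e2⟩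
    · have : q = 0 := by linarith
      simp [e1, e2, this]
    · have : q = 1 := by linarith
      simp [e1, e2, this]
  · rcases eq_or_lt_of_le hd with hz2 | hpos2
    · rw [← hz2, div_zero]; positivity
    · rw [div_le_div_iff₀ hpos2 hpos]
      exact stepq p q q' hp h2 h3 h4

lemma chiSq_mono_p {p' p q : ℝ} (hp : 0 ≤ p') (h1 : p' ≤ p) (h2 : p ≤ q) (h4 : q ≤ 1) :
    chiSq p q ≤ chiSq p' q := by
  unfold chiSq
  have hd' : 0 ≤ (p' + q) * (2 - (p' + q)) := by nlinarith
  have hd : 0 ≤ (p + q) * (2 - (p + q)) := by nlinarith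
  rcases eq_or_lt_of_le hd' with hz | hpos
  · rcases denom_zero hp (by linarith) (by linarith) h4 hz.symm with ⟨e1, e2⟩ | ⟨e1, e2⟩
    · have : p = 0 := by linarith
      simp [e1, e2, this]
    · have : p = 1 := by linarith
      simp [e1, e2, this]
  · rcases eq_or_lt_of_le hd with hz2 | hpos2
    · rw [← hz2, div_zero]; positivity
    · rw [div_le_div_iff₀ hpos2 hpos]
      exact stepp p' p q hp h1 h2 h4

lemma chiSq_mono {p' p q q' : ℝ} (h0 : 0 ≤ p') (h1 : p' ≤ p) (h2 : p ≤ q) (h3 : q ≤ q')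
    (h4 : q' ≤ 1) : chiSq p q ≤ chiSq p' q' :=
  le_trans (chiSq_mono_p h0 h1 h2 (le_trans h3 h4))
    (chiSq_mono_q h0 (le_trans h1 h2) h3 h4)

theorem stmt_2 :
    (∀ p q : ℝ, 0 ≤ p → p ≤ 1 → 0 ≤ q → q ≤ 1 →
      0 ≤ chiSq p q ∧ (chiSq p q = 0 ↔ p = q)) ∧
    (∀ p' p q q' : ℝ, 0 ≤ p' → p' ≤ p → p ≤ q → q ≤ q' → q' ≤ 1 →
      chiSq p q ≤ chiSq p' q' ∧ chiSq q p ≤ chiSq q' p') := by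
  constructor
  · intro p q hp0 hp1 hq0 hq1
    have hd : 0 ≤ (p + q) * (2 - (p + q)) := by nlinarith
    refine ⟨by unfold chiSq; positivity, ?_, ?_⟩
    · intro h
      by_contra hne
      have hnum : 0 < (p - q) ^ 2 :=
        lt_of_le_of_ne (sq_nonneg _) (Ne.symm (pow_ne_zero _ (sub_ne_zero.mpr hne)))
      have hden : 0 < (p + q) * (2 - (p + q)) := by
        rcases eq_or_lt_of_le hd with hz | h'
        · exfalso
          rcases denom_zero hp0 hq0 hp1 hq1 hz.symm with ⟨e1, e2⟩ | ⟨e1, e2⟩ <;>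
            exact hne (by rw [e1, e2])
        · exact h'
      have : 0 < chiSq p q := div_pos hnum hden
      rw [h] at this; exact lt_irrefl 0 this
    · intro h; subst h; simp [chiSq]
  · intro p' p q q' h0 h1 h2 h3 h4
    refine ⟨chiSq_mono h0 h1 h2 h3 h4, ?_⟩
    rw [chiSq_symm p q, chiSq_symm p' q']
    exact chiSq_mono h0 h1 h2 h3 h4
end

section
/- Let τ ≠ μ be distributions over {0,1}ⁿ with μ of full support. Then Δ_{χ²}(τ,μ) ≥ d_TV(τ,μ)² / (24·log(2n/d_TV(τ,μ))). -/
/-- Total variation distance between finitely supported distributions. -/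
noncomputable def tvDist {α : Type*} [Fintype α] (μ τ : α → ℝ) : ℝ :=
  (1 / 2) * ∑ x, |μ x - τ x|

/-- Probability under `ν` of the prefix event that the first `i` bits agree with `w`. -/
noncomputable def preProb (n : ℕ) (ν : (Fin n → Bool) → ℝ) (i : Fin n) (w : Fin n → Bool) : ℝ :=
  ∑ x, if (∀ j, j < i → x j = w j) then ν x else 0

/-- Conditional probability that bit `i` equals `1`, given the prefix of `w` before `i`. -/
noncomputable def condP (n : ℕ) (ν : (Fin n → Bool) → ℝ) (i : Fin n) (w : Fin n → Bool) : ℝ :=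
  (∑ x, if ((∀ j, j < i → x j = w j) ∧ x i = true) then ν x else 0) / preProb n ν i w

/-- Slice-wise chi-square divergence. -/
noncomputable def deltaChi (n : ℕ) (τ μ : (Fin n → Bool) → ℝ) : ℝ :=
  ∑ i : Fin n, ∑ w, τ w * chiSq (condP n τ i w) (condP n μ i w)

/-!
Let `F = ∑ √(τ x μ x)` be the Bhattacharyya coefficient; Cauchy–Schwarz gives
`d_TV² ≤ 1 - F² ≤ 2 (1 - F)`. Descend the tree of prefixes from the root, where
`√(τ(v) μ(v)) = 1`. At a node `v` the loss `√(τ(v) μ(v)) - ∑_children √(τ(c) μ(c))` is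
`√(τ(v) μ(v))` times the squared Hellinger distance of the next conditional bits, hence at most
`8 τ(v) χ²` as long as `μ(v) < 64 τ(v)`. Stopping at the first node with `μ(v) ≥ 64 τ(v)`, the
stopped region `A` has `τ(A) ≤ μ(A) / 64`, so by Cauchy–Schwarz it contributes at most
`μ(A) / 8` to `F`, and `F ≤ 1 - 3 μ(A) / 8`. Hence `1 - F ≤ 8 Δ + μ(A) / 8 ≤ 8 Δ + (1 - F) / 3`,
i.e. `d_TV² ≤ 24 Δ`, and the logarithm is at least `1`.
-/

open Real Finset

lemma chiSq_nonneg {p q : ℝ} (hp₀ : 0 ≤ p) (hp₁ : p ≤ 1) (hq₀ : 0 ≤ q) (hq₁ : q ≤ 1) :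
    0 ≤ chiSq p q :=
  div_nonneg (sq_nonneg _) (by nlinarith)

lemma sq_sqrt_sub_sqrt_mul_le {a b : ℝ} (ha : 0 ≤ a) (hb : 0 ≤ b) :
    (√a - √b) ^ 2 * (a + b) ≤ (a - b) ^ 2 := by
  have hsum : a + b ≤ (√a + √b) ^ 2 := by
    nlinarith [sq_sqrt ha, sq_sqrt hb, mul_nonneg (sqrt_nonneg a) (sqrt_nonneg b)]
  calc (√a - √b) ^ 2 * (a + b) ≤ (√a - √b) ^ 2 * (√a + √b) ^ 2 := by gcongr
    _ = (a - b) ^ 2 := by rw [← mul_pow]; congr 1; nlinarith [sq_sqrt ha, sq_sqrt hb]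

/-- The left-hand side is the squared Hellinger distance of `Ber p` and `Ber q`. -/
lemma one_sub_sqrt_sub_sqrt_le_chiSq {p q : ℝ} (hp₀ : 0 ≤ p) (hp₁ : p ≤ 1)
    (hq₀ : 0 ≤ q) (hq₁ : q ≤ 1) :
    1 - √p * √q - √(1 - p) * √(1 - q) ≤ chiSq p q := by
  rcases (add_nonneg hp₀ hq₀).eq_or_lt with h | hs
  · obtain ⟨rfl, rfl⟩ : p = 0 ∧ q = 0 := ⟨by linarith, by linarith⟩
    simp [chiSq]
  rcases (add_le_add hp₁ hq₁).eq_or_lt with h | ht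
  · obtain ⟨rfl, rfl⟩ : p = 1 ∧ q = 1 := ⟨by linarith, by linarith⟩
    simp [chiSq]
  have hX := sq_sqrt_sub_sqrt_mul_le hp₀ hq₀
  have hY := sq_sqrt_sub_sqrt_mul_le (sub_nonneg.2 hp₁) (sub_nonneg.2 hq₁)
  have hhel : 1 - √p * √q - √(1 - p) * √(1 - q)
      = ((√p - √q) ^ 2 + (√(1 - p) - √(1 - q)) ^ 2) / 2 := by
    nlinarith [sq_sqrt hp₀, sq_sqrt hq₀, sq_sqrt (sub_nonneg.2 hp₁), sq_sqrt (sub_nonneg.2 hq₁)]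
  rw [hhel, chiSq, le_div_iff₀ (mul_pos hs (by linarith))]
  nlinarith [mul_le_mul_of_nonneg_right hX (by linarith : (0:ℝ) ≤ 2 - (p + q)),
    mul_le_mul_of_nonneg_right hY hs.le]

lemma sqrt_mul_sub_sqrt_mul_sub_sqrt_mul_le {a₁ a₀ b₁ b₀ : ℝ} (ha₁ : 0 ≤ a₁) (ha₀ : 0 ≤ a₀)
    (hb₁ : 0 ≤ b₁) (hb₀ : 0 ≤ b₀) (hba : b₁ + b₀ ≤ 64 * (a₁ + a₀)) :
    √((a₁ + a₀) * (b₁ + b₀)) - √(a₁ * b₁) - √(a₀ * b₀)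
      ≤ 8 * (a₁ + a₀) * chiSq (a₁ / (a₁ + a₀)) (b₁ / (b₁ + b₀)) := by
  rcases (add_nonneg ha₁ ha₀).eq_or_lt with hT | hT
  · obtain ⟨rfl, rfl⟩ : a₁ = 0 ∧ a₀ = 0 := ⟨by linarith, by linarith⟩
    simp
  rcases (add_nonneg hb₁ hb₀).eq_or_lt with hM | hM
  · obtain ⟨rfl, rfl⟩ : b₁ = 0 ∧ b₀ = 0 := ⟨by linarith, by linarith⟩
    simp only [add_zero, mul_zero, sqrt_zero, sub_zero, zero_div]
    exact mul_nonneg (by positivity) <|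
      chiSq_nonneg (by positivity) (div_le_one_of_le₀ (by linarith) hT.le) le_rfl zero_le_one
  set T := a₁ + a₀ with hTdef
  set M := b₁ + b₀ with hMdef
  set p := a₁ / T
  set q := b₁ / M
  have hp₁ : p ≤ 1 := div_le_one_of_le₀ (by linarith) hT.le
  have hq₁ : q ≤ 1 := div_le_one_of_le₀ (by linarith) hM.le
  have hsplit {r s : ℝ} (hr : 0 ≤ r) (hs : 0 ≤ s) :
      √((r * T) * (s * M)) = √r * √s * √(T * M) := by
    rw [show r * T * (s * M) = r * s * (T * M) by ring, sqrt_mul (mul_nonneg hr hs),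
      sqrt_mul hr]
  have ha₁ : a₁ = p * T := (div_mul_cancel₀ a₁ hT.ne').symm
  have ha₀ : a₀ = (1 - p) * T := by linarith [sub_mul 1 p T]
  have hb₁ : b₁ = q * M := (div_mul_cancel₀ b₁ hM.ne').symm
  have hb₀ : b₀ = (1 - q) * M := by linarith [sub_mul 1 q M]
  have hTM : √(T * M) ≤ 8 * T :=
    sqrt_le_iff.2 ⟨by positivity, by nlinarith⟩
  calc √(T * M) - √(a₁ * b₁) - √(a₀ * b₀)
      = √(T * M) * (1 - √p * √q - √(1 - p) * √(1 - q)) := by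
        rw [ha₁, hb₁, ha₀, hb₀, hsplit (by positivity) (by positivity),
          hsplit (sub_nonneg.2 hp₁) (sub_nonneg.2 hq₁)]
        ring
    _ ≤ √(T * M) * chiSq p q := by
        gcongr
        exact one_sub_sqrt_sub_sqrt_le_chiSq (by positivity) hp₁ (by positivity) hq₁
    _ ≤ 8 * T * chiSq p q := by
        gcongr
        exact chiSq_nonneg (by positivity) hp₁ (by positivity) hq₁

section condP

variable {n : ℕ} {ν : (Fin n → Bool) → ℝ}

lemma condP_nonneg (hν : ∀ x, 0 ≤ ν x) (i : Fin n) (w : Fin n → Bool) : 0 ≤ condP n ν i w :=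
  div_nonneg (sum_nonneg fun x _ => by split_ifs <;> simp [hν x])
    (sum_nonneg fun x _ => by split_ifs <;> simp [hν x])

lemma condP_le_one (hν : ∀ x, 0 ≤ ν x) (i : Fin n) (w : Fin n → Bool) : condP n ν i w ≤ 1 :=
  div_le_one_of_le₀ (sum_le_sum fun x _ => by split_ifs <;> simp_all)
    (sum_nonneg fun x _ => by split_ifs <;> simp [hν x])

end condP

lemma deltaChi_nonneg {n : ℕ} {τ μ : (Fin n → Bool) → ℝ} (hτ : ∀ x, 0 ≤ τ x)
    (hμ : ∀ x, 0 ≤ μ x) : 0 ≤ deltaChi n τ μ :=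
  sum_nonneg fun i _ => sum_nonneg fun w _ => mul_nonneg (hτ w) <|
    chiSq_nonneg (condP_nonneg hτ i w) (condP_le_one hτ i w) (condP_nonneg hμ i w)
      (condP_le_one hμ i w)

lemma Fin.sum_univ_cons {β M : Type*} [Fintype β] [AddCommMonoid M] {n : ℕ}
    (f : (Fin (n + 1) → β) → M) : ∑ x, f x = ∑ b, ∑ y, f (Fin.cons b y) := by
  rw [← (Fin.consEquiv fun _ => β).sum_comp, Fintype.sum_prod_type]
  rfl

section cons

variable {n : ℕ}

lemma condP_zero (ν : (Fin (n + 1) → Bool) → ℝ) (w : Fin (n + 1) → Bool) :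
    condP (n + 1) ν 0 w = (∑ y, ν (Fin.cons true y)) / ∑ x, ν x := by
  simp [condP, preProb, Fin.sum_univ_cons ν,
    Fin.sum_univ_cons (fun x => if x 0 = true then ν x else 0)]

lemma condP_succ_cons (ν : (Fin (n + 1) → Bool) → ℝ) (i : Fin n) (b : Bool)
    (y : Fin n → Bool) :
    condP (n + 1) ν i.succ (Fin.cons b y) = condP n (fun z => ν (Fin.cons b z)) i y := by
  have hpre (c : Bool) (z : Fin n → Bool) :
      (∀ j, j < i.succ →
          (Fin.cons c z : Fin (n + 1) → Bool) j = (Fin.cons b y : Fin (n + 1) → Bool) j) ↔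
        c = b ∧ ∀ j, j < i → z j = y j := by
    simp [Fin.forall_fin_succ, Fin.succ_pos]
  simp only [condP, preProb, Fin.sum_univ_cons (fun x => ite _ (ν x) 0), hpre, Fin.cons_succ]
  cases b <;> simp

lemma deltaChi_succ (τ μ : (Fin (n + 1) → Bool) → ℝ) :
    deltaChi (n + 1) τ μ
      = (∑ x, τ x) * chiSq ((∑ y, τ (Fin.cons true y)) / ∑ x, τ x)
          ((∑ y, μ (Fin.cons true y)) / ∑ x, μ x)
        + ∑ b, deltaChi n (fun y => τ (Fin.cons b y)) (fun y => μ (Fin.cons b y)) := by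
  simp only [deltaChi, Fin.sum_univ_succ, condP_zero, ← sum_mul]
  congr 1
  rw [sum_comm, Fin.sum_univ_cons]
  simp only [condP_succ_cons]
  exact sum_congr rfl fun b _ => sum_comm

end cons

noncomputable def bhattacharyya {α : Type*} [Fintype α] (τ μ : α → ℝ) : ℝ :=
  ∑ x, √(τ x) * √(μ x)

lemma bhattacharyya_nonneg {α : Type*} [Fintype α] (τ μ : α → ℝ) : 0 ≤ bhattacharyya τ μ :=
  sum_nonneg fun _ _ => by positivity

lemma Fin.sum_filter_tail_mem {β M : Type*} [Fintype β] [DecidableEq β] [AddCommMonoid M]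
    {n : ℕ} (A : β → Finset (Fin n → β)) (f : (Fin (n + 1) → β) → M) :
    ∑ x ∈ univ.filter (fun x : Fin (n + 1) → β => Fin.tail x ∈ A (x 0)), f x
      = ∑ b, ∑ y ∈ A b, f (Fin.cons b y) := by
  rw [sum_filter, Fin.sum_univ_cons]
  simp only [Fin.cons_zero, Fin.tail_cons, sum_ite_mem, univ_inter]

theorem exists_stopping_set {n : ℕ} (τ μ : (Fin n → Bool) → ℝ) (hτ : ∀ x, 0 ≤ τ x)
    (hμ : ∀ x, 0 ≤ μ x) :
    ∃ A : Finset (Fin n → Bool), 64 * ∑ x ∈ A, τ x ≤ ∑ x ∈ A, μ x ∧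
      √((∑ x, τ x) * ∑ x, μ x) - bhattacharyya τ μ ≤ 8 * deltaChi n τ μ + (∑ x ∈ A, μ x) / 8 := by
  induction n with
  | zero =>
    refine ⟨∅, by simp, ?_⟩
    simp [bhattacharyya, deltaChi, sqrt_mul (hτ _)]
  | succ n ih =>
    have hτ₁ : 0 ≤ ∑ x, τ x := sum_nonneg fun x _ => hτ x
    have hμ₁ : 0 ≤ ∑ x, μ x := sum_nonneg fun x _ => hμ x
    by_cases hstop : 64 * ∑ x, τ x ≤ ∑ x, μ x
    · refine ⟨univ, hstop, ?_⟩
      have hΔ := deltaChi_nonneg hτ hμ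
      have hroot : √((∑ x, τ x) * ∑ x, μ x) ≤ (∑ x, μ x) / 8 :=
        sqrt_le_iff.2 ⟨by positivity, by nlinarith⟩
      linarith [bhattacharyya_nonneg τ μ]
    choose A hA64 hA using fun b =>
      ih (fun y => τ (Fin.cons b y)) (fun y => μ (Fin.cons b y)) (fun _ => hτ _) (fun _ => hμ _)
    refine ⟨univ.filter fun x => Fin.tail x ∈ A (x 0), ?_, ?_⟩
    · rw [Fin.sum_filter_tail_mem, Fin.sum_filter_tail_mem, mul_sum]
      exact sum_le_sum fun b _ => hA64 b
    simp only [bhattacharyya] at hA ⊢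
    rw [deltaChi_succ, Fin.sum_filter_tail_mem, Fin.sum_univ_cons τ, Fin.sum_univ_cons μ,
      Fin.sum_univ_cons (fun x => √(τ x) * √(μ x))]
    rw [Fin.sum_univ_cons τ, Fin.sum_univ_cons μ] at hstop
    simp only [Fintype.sum_bool] at hstop ⊢
    have hnode := sqrt_mul_sub_sqrt_mul_sub_sqrt_mul_le
      (sum_nonneg fun y (_ : y ∈ univ) => hτ (Fin.cons true y))
      (sum_nonneg fun y _ => hτ (Fin.cons false y)) (sum_nonneg fun y _ => hμ (Fin.cons true y))
      (sum_nonneg fun y _ => hμ (Fin.cons false y)) (not_le.1 hstop).le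
    linarith [hA true, hA false]

lemma tvDist_sq_le_one_sub_bhattacharyya_sq {α : Type*} [Fintype α] {τ μ : α → ℝ}
    (hτ : ∀ x, 0 ≤ τ x) (hτ₁ : ∑ x, τ x = 1) (hμ : ∀ x, 0 ≤ μ x) (hμ₁ : ∑ x, μ x = 1) :
    tvDist τ μ ^ 2 ≤ 1 - bhattacharyya τ μ ^ 2 := by
  have hfactor (x : α) : |τ x - μ x| = |√(τ x) - √(μ x)| * (√(τ x) + √(μ x)) := by
    rw [← abs_of_nonneg (by positivity : 0 ≤ √(τ x) + √(μ x)), ← abs_mul]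
    congr 1
    nlinarith [sq_sqrt (hτ x), sq_sqrt (hμ x)]
  have hsq (s : ℝ) (hs : s ^ 2 = 1) :
      ∑ x, (√(τ x) + s * √(μ x)) ^ 2 = 2 + 2 * s * bhattacharyya τ μ := by
    have (x : α) : (√(τ x) + s * √(μ x)) ^ 2 = τ x + μ x + 2 * s * (√(τ x) * √(μ x)) := by
      nlinarith [sq_sqrt (hτ x), sq_sqrt (hμ x)]
    simp only [this, sum_add_distrib, hτ₁, hμ₁, ← mul_sum, bhattacharyya]
    ring
  have hcs := sum_mul_sq_le_sq_mul_sq univ (fun x => |√(τ x) - √(μ x)|)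
    (fun x => √(τ x) + √(μ x))
  simp only [← hfactor, sq_abs] at hcs
  have h₁ := hsq (-1) (by norm_num)
  have h₂ := hsq 1 (by norm_num)
  simp only [neg_one_mul, one_mul, ← sub_eq_add_neg] at h₁ h₂
  rw [h₁, h₂] at hcs
  rw [tvDist]
  nlinarith

lemma one_sub_bhattacharyya_le {n : ℕ} {τ μ : (Fin n → Bool) → ℝ}
    (hτ : ∀ x, 0 ≤ τ x) (hτ₁ : ∑ x, τ x = 1) (hμ : ∀ x, 0 ≤ μ x) (hμ₁ : ∑ x, μ x = 1) :
    1 - bhattacharyya τ μ ≤ 12 * deltaChi n τ μ := by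
  obtain ⟨A, hA64, hA⟩ := exists_stopping_set τ μ hτ hμ
  rw [hτ₁, hμ₁, mul_one, sqrt_one] at hA
  set t := ∑ x ∈ A, τ x
  set m := ∑ x ∈ A, μ x
  have ht : 0 ≤ t := sum_nonneg fun x _ => hτ x
  have hcompl (ν : (Fin n → Bool) → ℝ) (hν : ∑ x, ν x = 1) :
      ∑ x ∈ Aᶜ, ν x = 1 - ∑ x ∈ A, ν x := by
    rw [← hν, ← sum_add_sum_compl A]; ring
  have hm₁ : m ≤ 1 := by
    linarith [hcompl μ hμ₁, sum_nonneg fun x (_ : x ∈ Aᶜ) => hμ x]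
  have ht₁ : t ≤ 1 := by
    linarith [hcompl τ hτ₁, sum_nonneg fun x (_ : x ∈ Aᶜ) => hτ x]
  have hin : ∑ x ∈ A, √(τ x) * √(μ x) ≤ m / 8 := by
    refine (sum_sqrt_mul_sqrt_le A hτ hμ).trans ?_
    rw [← sqrt_mul ht]
    exact sqrt_le_iff.2 ⟨by linarith, by nlinarith⟩
  have hout : ∑ x ∈ Aᶜ, √(τ x) * √(μ x) ≤ 1 - m / 2 := by
    refine (sum_sqrt_mul_sqrt_le Aᶜ hτ hμ).trans ?_
    rw [hcompl τ hτ₁, hcompl μ hμ₁, ← sqrt_mul (by linarith)]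
    exact sqrt_le_iff.2 ⟨by linarith, by nlinarith⟩
  have hF : bhattacharyya τ μ ≤ 1 - 3 / 8 * m := by
    rw [bhattacharyya, ← sum_add_sum_compl A]
    linarith
  linarith

lemma tvDist_nonneg {α : Type*} [Fintype α] (τ μ : α → ℝ) : 0 ≤ tvDist τ μ :=
  mul_nonneg (by norm_num) (sum_nonneg fun _ _ => abs_nonneg _)

lemma tvDist_sq_le_mul_deltaChi {n : ℕ} {τ μ : (Fin n → Bool) → ℝ}
    (hτ : ∀ x, 0 ≤ τ x) (hτ₁ : ∑ x, τ x = 1) (hμ : ∀ x, 0 ≤ μ x) (hμ₁ : ∑ x, μ x = 1) :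
    tvDist τ μ ^ 2 ≤ 24 * deltaChi n τ μ := by
  nlinarith [tvDist_sq_le_one_sub_bhattacharyya_sq hτ hτ₁ hμ hμ₁, bhattacharyya_nonneg τ μ,
    one_sub_bhattacharyya_le hτ hτ₁ hμ hμ₁]

theorem stmt_8_general (n : ℕ) (μ τ : (Fin n → Bool) → ℝ)
    (hμ0 : ∀ x, 0 < μ x) (hμ1 : ∑ x, μ x = 1)
    (hτ0 : ∀ x, 0 ≤ τ x) (hτ1 : ∑ x, τ x = 1) :
    deltaChi n τ μ ≥ (tvDist τ μ) ^ 2 / (24 * Real.logb 2 (2 * n / tvDist τ μ)) := by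
  have hμ : ∀ x, 0 ≤ μ x := fun x => (hμ0 x).le
  have hΔ := deltaChi_nonneg hτ0 hμ
  rcases (tvDist_nonneg τ μ).eq_or_lt with htv | htv
  · simp [← htv, hΔ]
  rcases Nat.eq_zero_or_pos n with rfl | hn
  · simp [hΔ]
  have htv₁ : tvDist τ μ ≤ 1 := by
    nlinarith [tvDist_sq_le_one_sub_bhattacharyya_sq hτ0 hτ1 hμ hμ1]
  have hlog : 1 ≤ logb 2 (2 * n / tvDist τ μ) := by
    rw [le_logb_iff_rpow_le one_lt_two (by positivity), rpow_one, le_div_iff₀ htv]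
    nlinarith [Nat.one_le_cast (α := ℝ) |>.2 hn]
  rw [ge_iff_le, div_le_iff₀ (by positivity)]
  nlinarith [tvDist_sq_le_mul_deltaChi hτ0 hτ1 hμ hμ1]

theorem stmt_8 (n : ℕ) (μ τ : (Fin n → Bool) → ℝ)
    (hμ0 : ∀ x, 0 < μ x) (hμ1 : ∑ x, μ x = 1)
    (hτ0 : ∀ x, 0 ≤ τ x) (hτ1 : ∑ x, τ x = 1)
    (hne : τ ≠ μ) :
    deltaChi n τ μ ≥ (tvDist τ μ) ^ 2 / (24 * Real.logb 2 (2 * n / tvDist τ μ)) :=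
  stmt_8_general n μ τ hμ0 hμ1 hτ0 hτ1
end
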